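/- arXiv:math/0007194 — 2 statements merged into one kernel-verified Lean document; each statement's English description precedes it below -/
import Mathlib

section
/- For any permutation τ ∈ S_k avoiding both 213 and 231, with τ = (τ_1, τ') where τ' is τ with its first entry removed (and values rescaled to {1,...,k−1}), the number d_τ(n) of permutations in S_n avoiding 213, 231, and τ satisfies d_τ(n) = d_τ(n−1) + d_{τ'}(n−1) for all n ≥ k. -/
/-- `σ` contains the pattern `p` (given as a sequence of values). -/
def PermContains {n k : ℕ} (σ : Equiv.Perm (Fin n)) (p : Fin k → Fin k) : Prop :=
  ∃ f : Fin k → Fin n, StrictMono f ∧ ∀ i j : Fin k, p i < p j ↔ σ (f i) < σ (f j)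

/-- `σ` avoids the pattern `p`. -/
def PermAvoids {n k : ℕ} (σ : Equiv.Perm (Fin n)) (p : Fin k → Fin k) : Prop :=
  ¬ PermContains σ p

def p123 : Fin 3 → Fin 3 := ![0, 1, 2]
def p132 : Fin 3 → Fin 3 := ![0, 2, 1]
def p213 : Fin 3 → Fin 3 := ![1, 0, 2]
def p231 : Fin 3 → Fin 3 := ![1, 2, 0]
def p312 : Fin 3 → Fin 3 := ![2, 0, 1]
def p321 : Fin 3 → Fin 3 := ![2, 1, 0]

/-- the list `a, a-1, ..., b` (empty if `b > a`). -/
def descList (a b : ℕ) : List ℕ := (List.range (a + 1 - b)).map (fun j => a - j)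

/-- the list `a, a+1, ..., b` (empty if `b > a`). -/
def ascList (a b : ℕ) : List ℕ := (List.range (b + 1 - a)).map (fun j => a + j)

/-! A permutation avoiding 213 and 231 starts with its minimum or its maximum, and deleting that
first entry leaves a permutation avoiding 213 and 231 again. If `τ` starts with its minimum, then
prepending a new minimum to `σ` gives a permutation containing `τ` exactly when `σ` contains `τ'`,
while prepending a new maximum gives one containing `τ` exactly when `σ` does, because no
occurrence of `τ` can start at the maximum. The case where `τ` starts with its maximum follows by
complementing values, which exchanges 213 and 231. -/

namespace PermPattern

open Equiv

variable {m n k : ℕ}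

lemma PermContains.of_strictMono_comp {n' : ℕ} {σ : Perm (Fin n)} {σ' : Perm (Fin n')}
    {p : Fin k → Fin k} {g : Fin n' → Fin n} (hg : StrictMono g)
    (hval : ∀ a b, σ' a < σ' b ↔ σ (g a) < σ (g b)) : PermContains σ' p → PermContains σ p
  | ⟨f, hf, h⟩ => ⟨g ∘ f, hg.comp hf, fun i j => (h i j).trans (hval _ _)⟩

def complement (σ : Perm (Fin n)) : Perm (Fin n) := σ.trans Fin.revPerm

@[simp] lemma complement_apply (σ : Perm (Fin n)) (i : Fin n) : complement σ i = (σ i).rev := rfl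

lemma complement_involutive : Function.Involutive (complement (n := n)) := by
  intro σ; ext i; simp

lemma permContains_complement_iff {σ : Perm (Fin n)} {p : Fin k → Fin k} :
    PermContains (complement σ) p ↔ PermContains σ (Fin.rev ∘ p) := by
  simp only [PermContains, complement_apply, Function.comp_apply, Fin.rev_lt_rev]
  exact exists_congr fun f => and_congr_right fun _ => forall_comm

def consMin (σ : Perm (Fin m)) : Perm (Fin (m + 1)) := Perm.decomposeFin.symm (0, σ)

@[simp] lemma consMin_apply_zero (σ : Perm (Fin m)) : consMin σ 0 = 0 :=
  Perm.decomposeFin_symm_apply_zero 0 σ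

@[simp] lemma consMin_apply_succ (σ : Perm (Fin m)) (i : Fin m) :
    consMin σ i.succ = (σ i).succ := by
  simp [consMin, Perm.decomposeFin_symm_apply_succ]

lemma consMin_injective : Function.Injective (consMin (m := m)) :=
  Perm.decomposeFin.symm.injective.comp (Prod.mk_right_injective 0)

lemma range_consMin : Set.range (consMin (m := m)) = {σ | σ 0 = 0} := by
  refine Set.Subset.antisymm (Set.range_subset_iff.2 consMin_apply_zero) fun σ hσ => ?_
  refine ⟨(Perm.decomposeFin σ).2, ?_⟩
  have hfst : (Perm.decomposeFin σ).1 = 0 := by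
    rw [← Perm.decomposeFin_symm_apply_zero (Perm.decomposeFin σ).1 (Perm.decomposeFin σ).2,
      Prod.mk.eta, Equiv.symm_apply_apply, hσ]
  rw [consMin, ← hfst, Prod.mk.eta, Equiv.symm_apply_apply]

lemma permContains_of_consMin {σ : Perm (Fin m)} {p : Fin k → Fin k} {f : Fin k → Fin (m + 1)}
    (hf : StrictMono f) (hf0 : ∀ i, f i ≠ 0)
    (h : ∀ i j, p i < p j ↔ consMin σ (f i) < consMin σ (f j)) : PermContains σ p := by
  refine ⟨fun i => (f i).pred (hf0 i), fun i j hij => Fin.pred_lt_pred_iff.2 (hf hij),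
    fun i j => ?_⟩
  simp only [h, ← Fin.succ_lt_succ_iff (a := σ _), ← consMin_apply_succ, Fin.succ_pred]

lemma permContains_consMin_iff {σ : Perm (Fin m)} {p : Fin (k + 1) → Fin (k + 1)}
    (hp : ∃ j, p j < p 0) : PermContains (consMin σ) p ↔ PermContains σ p := by
  refine ⟨fun ⟨f, hf, h⟩ => permContains_of_consMin hf (fun i hi => ?_) h,
    PermContains.of_strictMono_comp Fin.strictMono_succ fun a b => by simp⟩
  obtain ⟨j, hj⟩ := hp
  have hf0 : f 0 = 0 := Fin.le_zero_iff.1 (hi ▸ hf.monotone (Fin.zero_le i))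
  have hlt := (h j 0).1 hj
  rw [hf0, consMin_apply_zero] at hlt
  exact Fin.not_lt_zero _ hlt

lemma permContains_consMin_iff_tail {σ : Perm (Fin m)} {p : Fin (k + 1) → Fin (k + 1)}
    {q : Fin k → Fin k} (hp0 : ∀ j : Fin k, p 0 < p j.succ)
    (hpq : ∀ i j, q i < q j ↔ p i.succ < p j.succ) :
    PermContains (consMin σ) p ↔ PermContains σ q := by
  constructor
  · rintro ⟨f, hf, h⟩
    exact permContains_of_consMin (hf.comp Fin.strictMono_succ)
      (fun i => (hf.lt_iff_lt.2 i.succ_pos).ne_bot) fun i j => (hpq i j).trans (h _ _)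
  · rintro ⟨f, hf, h⟩
    refine ⟨Fin.cons 0 (Fin.succ ∘ f),
      Fin.strictMono_cons.2 ⟨fun j => Fin.succ_pos _, Fin.strictMono_succ.comp hf⟩, ?_⟩
    intro i j
    cases i using Fin.cases with
    | zero => cases j using Fin.cases with
      | zero => simp
      | succ j => simpa using hp0 j
    | succ i => cases j using Fin.cases with
      | zero => simpa using (hp0 i).le
      | succ j => simpa using (hpq i j).symm.trans (h i j)

def consMax (σ : Perm (Fin m)) : Perm (Fin (m + 1)) := complement (consMin (complement σ))

@[simp] lemma consMax_apply_zero (σ : Perm (Fin m)) : consMax σ 0 = Fin.last m := by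
  simp [consMax]

lemma consMax_injective : Function.Injective (consMax (m := m)) :=
  complement_involutive.injective.comp <|
    consMin_injective.comp complement_involutive.injective

lemma range_consMax : Set.range (consMax (m := m)) = {σ | σ 0 = Fin.last m} := by
  refine Set.Subset.antisymm (Set.range_subset_iff.2 consMax_apply_zero) fun σ hσ => ?_
  obtain ⟨τ, hτ⟩ : complement σ ∈ Set.range consMin := by
    rw [range_consMin]; exact (congrArg Fin.rev hσ).trans (Fin.rev_last m)
  exact ⟨complement τ, by rw [consMax, complement_involutive, hτ, complement_involutive]⟩

lemma permContains_consMax_iff {σ : Perm (Fin m)} {p : Fin (k + 1) → Fin (k + 1)}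
    (hp : ∃ j, p 0 < p j) : PermContains (consMax σ) p ↔ PermContains σ p := by
  obtain ⟨j, hj⟩ := hp
  have hrev : (p j).rev < (p 0).rev := Fin.rev_lt_rev.2 hj
  rw [consMax, permContains_complement_iff, permContains_consMin_iff ⟨j, hrev⟩,
    permContains_complement_iff]
  simp [Function.comp_def]

lemma ncard_eq_ncard_preimage_consMin_add_ncard_preimage_consMax (hm : m ≠ 0)
    {S : Set (Perm (Fin (m + 1)))} (hS : ∀ σ ∈ S, σ 0 = 0 ∨ σ 0 = Fin.last m) :
    S.ncard = (consMin ⁻¹' S).ncard + (consMax ⁻¹' S).ncard := by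
  have hsplit : S = consMin '' (consMin ⁻¹' S) ∪ consMax '' (consMax ⁻¹' S) := by
    rw [Set.image_preimage_eq_inter_range, Set.image_preimage_eq_inter_range, range_consMin,
      range_consMax, ← Set.inter_union_distrib_left]
    exact (Set.inter_eq_left.2 hS).symm
  have hdisj : Disjoint (consMin '' (consMin ⁻¹' S)) (consMax '' (consMax ⁻¹' S)) := by
    refine Set.disjoint_left.2 ?_
    rintro _ ⟨σ, -, rfl⟩ ⟨τ, -, hτ⟩
    have h0 := congrArg (· 0) hτ
    simp only [consMax_apply_zero, consMin_apply_zero] at h0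
    exact hm (by simpa [Fin.ext_iff] using h0)
  conv_lhs => rw [hsplit, Set.ncard_union_eq hdisj,
    Set.ncard_image_of_injective _ consMin_injective,
    Set.ncard_image_of_injective _ consMax_injective]

lemma apply_zero_eq_zero_or_eq_last {σ : Perm (Fin (m + 1))} (h213 : PermAvoids σ p213)
    (h231 : PermAvoids σ p231) : σ 0 = 0 ∨ σ 0 = Fin.last m := by
  by_contra! h
  have hpos : 0 < σ 0 := Fin.pos_of_ne_zero h.1
  have hlt : σ 0 < Fin.last m := lt_of_le_of_ne (Fin.le_last _) h.2
  obtain ⟨a, ha⟩ := σ.surjective 0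
  obtain ⟨b, hb⟩ := σ.surjective (Fin.last m)
  have ha0 : 0 < a := Fin.pos_of_ne_zero fun h0 => h.1 (h0 ▸ ha)
  have hb0 : 0 < b := Fin.pos_of_ne_zero fun h0 => h.2 (h0 ▸ hb)
  rcases lt_or_gt_of_ne (show a ≠ b by rintro rfl; exact (hpos.trans hlt).ne (ha.symm.trans hb))
    with hab | hba
  · refine h213 ⟨![0, a, b], by simp [ha0, hab], ?_⟩
    intro i j
    fin_cases i <;> fin_cases j <;> simp [p213, ha, hb, hpos, hlt, hpos.trans hlt, Fin.le_last]
  · refine h231 ⟨![0, b, a], by simp [hb0, hba], ?_⟩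
    intro i j
    fin_cases i <;> fin_cases j <;> simp [p231, ha, hb, hpos, hlt, hpos.trans hlt, Fin.le_last]

def avoiders213231 (n : ℕ) (p : Fin k → Fin k) : Set (Perm (Fin n)) :=
  {σ | PermAvoids σ p213 ∧ PermAvoids σ p231 ∧ PermAvoids σ p}

lemma preimage_consMin_avoiders213231 {p : Fin (k + 1) → Fin (k + 1)} {q : Fin k → Fin k}
    (hp0 : ∀ j : Fin k, p 0 < p j.succ) (hpq : ∀ i j, q i < q j ↔ p i.succ < p j.succ) :
    consMin ⁻¹' avoiders213231 (m + 1) p = avoiders213231 m q := by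
  ext σ
  simp only [avoiders213231, PermAvoids, Set.preimage_ofPred_eq, Set.mem_ofPred_eq,
    permContains_consMin_iff (p := p213) ⟨1, by decide⟩,
    permContains_consMin_iff (p := p231) ⟨2, by decide⟩, permContains_consMin_iff_tail hp0 hpq]

lemma preimage_consMax_avoiders213231 {p : Fin (k + 1) → Fin (k + 1)} (hp : ∃ j, p 0 < p j) :
    consMax ⁻¹' avoiders213231 (m + 1) p = avoiders213231 m p := by
  ext σ
  simp only [avoiders213231, PermAvoids, Set.preimage_ofPred_eq, Set.mem_ofPred_eq,
    permContains_consMax_iff (p := p213) ⟨2, by decide⟩,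
    permContains_consMax_iff (p := p231) ⟨1, by decide⟩, permContains_consMax_iff hp]

lemma ncard_avoiders213231_succ {p : Fin (k + 1) → Fin (k + 1)} {q : Fin k → Fin k}
    (hk : k ≠ 0) (hm : m ≠ 0) (hp0 : ∀ j : Fin k, p 0 < p j.succ)
    (hpq : ∀ i j, q i < q j ↔ p i.succ < p j.succ) :
    (avoiders213231 (m + 1) p).ncard =
      (avoiders213231 m p).ncard + (avoiders213231 m q).ncard := by
  rw [ncard_eq_ncard_preimage_consMin_add_ncard_preimage_consMax hm
      fun σ hσ => apply_zero_eq_zero_or_eq_last hσ.1 hσ.2.1,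
    preimage_consMin_avoiders213231 hp0 hpq,
    preimage_consMax_avoiders213231 ⟨Fin.succ ⟨0, Nat.pos_of_ne_zero hk⟩, hp0 _⟩, add_comm]

lemma rev_comp_p213 : Fin.rev ∘ p213 = p231 := by decide

lemma rev_comp_p231 : Fin.rev ∘ p231 = p213 := by decide

lemma ncard_avoiders213231_rev_comp (p : Fin k → Fin k) :
    (avoiders213231 n (Fin.rev ∘ p)).ncard = (avoiders213231 n p).ncard := by
  have hpre : avoiders213231 n (Fin.rev ∘ p) = complement ⁻¹' avoiders213231 n p := by
    ext σ
    simp only [avoiders213231, PermAvoids, Set.preimage_ofPred_eq, Set.mem_ofPred_eq,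
      permContains_complement_iff, rev_comp_p213, rev_comp_p231]
    tauto
  rw [hpre, Set.ncard_preimage_of_injective_subset_range complement_involutive.injective
    (by rw [complement_involutive.surjective.range_eq]; exact Set.subset_univ _)]

end PermPattern

open PermPattern in
theorem stmt14 (k : ℕ) (hk : 1 ≤ k) (τ : Equiv.Perm (Fin (k + 1))) (τ' : Equiv.Perm (Fin k))
    (h1 : PermAvoids τ p213) (h2 : PermAvoids τ p231)
    (hiso : ∀ i j : Fin k, τ' i < τ' j ↔ τ i.succ < τ j.succ) :
    ∀ n, k + 1 ≤ n →
      Nat.card {σ : Equiv.Perm (Fin n) //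
          PermAvoids σ p213 ∧ PermAvoids σ p231 ∧ PermAvoids σ ⇑τ}
        = Nat.card {σ : Equiv.Perm (Fin (n - 1)) //
            PermAvoids σ p213 ∧ PermAvoids σ p231 ∧ PermAvoids σ ⇑τ}
        + Nat.card {σ : Equiv.Perm (Fin (n - 1)) //
            PermAvoids σ p213 ∧ PermAvoids σ p231 ∧ PermAvoids σ ⇑τ'} := by
  intro n hn
  obtain ⟨m, rfl⟩ : ∃ m, n = m + 1 := ⟨n - 1, by omega⟩
  change (avoiders213231 (m + 1) τ).ncard =
    (avoiders213231 m τ).ncard + (avoiders213231 m τ').ncard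
  have hne (j : Fin k) : τ j.succ ≠ τ 0 := τ.injective.ne (Fin.succ_ne_zero j)
  rcases apply_zero_eq_zero_or_eq_last h1 h2 with h0 | h0
  · refine ncard_avoiders213231_succ (by omega) (by omega) (fun j => ?_) hiso
    rw [h0]
    exact Fin.pos_of_ne_zero (h0 ▸ hne j)
  · have hrev := ncard_avoiders213231_succ (m := m) (p := Fin.rev ∘ τ) (q := Fin.rev ∘ τ')
      (by omega) (by omega) (fun j => Fin.rev_lt_rev.2 ?_) fun i j => by simp [hiso]
    · simpa only [ncard_avoiders213231_rev_comp] using hrev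
    · rw [h0]
      exact lt_of_le_of_ne (Fin.le_last _) (h0 ▸ hne j)
end

section
/- The number of permutations in S_n avoiding the patterns 213, 231, and 1432 equals C(n,2) + 1 for all n ≥ 1. -/
/-!
Avoiding 213 and 231 forces the first entry of a permutation to be its minimum or its maximum,
and the standardized rest again avoids both patterns. A leading maximum takes part in no
occurrence of 213, 231 or 1432, and in one of 321 exactly when the rest is not increasing.
A leading minimum takes part in no occurrence of 213, 231 or 321, and it completes an occurrence
of 1432 exactly when the rest contains 321. Hence `|Av_n(213, 231, 321)| = n` and
`|Av_n(213, 231, 1432)| = |Av_{n-1}(213, 231, 1432)| + (n - 1)`.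
-/

open Equiv Function

namespace PatternAvoidance

variable {m n k : ℕ}

def p21 : Fin 2 → Fin 2 := ![1, 0]

def p1432 : Fin 4 → Fin 4 := ![0, 3, 2, 1]

def Avoids213231 (q : Fin k → Fin k) (σ : Perm (Fin n)) : Prop :=
  PermAvoids σ p213 ∧ PermAvoids σ p231 ∧ PermAvoids σ q

lemma PermContains.le {σ : Perm (Fin n)} {p : Fin k → Fin k} (h : PermContains σ p) : k ≤ n :=
  let ⟨f, hf, _⟩ := h
  Fin.le_of_injective f hf.injective

lemma permContains_of_forall_lt {σ : Perm (Fin n)} {p : Fin k → Fin k} (hp : Injective p)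
    {f : Fin k → Fin n} (hf : StrictMono f) (h : ∀ i j, p i < p j → σ (f i) < σ (f j)) :
    PermContains σ p := by
  refine ⟨f, hf, fun i j => ⟨h i j, fun hσ => ?_⟩⟩
  rcases lt_trichotomy (p i) (p j) with hij | hij | hij
  · exact hij
  · rw [hp hij] at hσ
    exact absurd hσ (lt_irrefl _)
  · exact absurd (h j i hij) hσ.not_gt

lemma permContains_p213 {σ : Perm (Fin n)} {x y z : Fin n} (hxy : x < y) (hyz : y < z)
    (hyx : σ y < σ x) (hxz : σ x < σ z) : PermContains σ p213 :=
  permContains_of_forall_lt (f := ![x, y, z]) (by decide) (by simp [hxy, hyz])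
    (by simp [Fin.forall_fin_succ, p213, hyx, hxz, hyx.trans hxz])

lemma permContains_p231 {σ : Perm (Fin n)} {x y z : Fin n} (hxy : x < y) (hyz : y < z)
    (hzx : σ z < σ x) (hxy' : σ x < σ y) : PermContains σ p231 :=
  permContains_of_forall_lt (f := ![x, y, z]) (by decide) (by simp [hxy, hyz])
    (by simp [Fin.forall_fin_succ, p231, hzx, hxy', hzx.trans hxy'])

lemma one_permAvoids {p : Fin k → Fin k} {i j : Fin k} (hij : i < j) (hp : p j < p i) :
    PermAvoids (1 : Perm (Fin n)) p := fun ⟨_, hf, h⟩ =>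
  (hf hij).not_gt ((h j i).1 hp)

lemma permAvoids_p21_iff {τ : Perm (Fin n)} : PermAvoids τ p21 ↔ τ = 1 := by
  refine ⟨fun h => ?_, fun h => h ▸ one_permAvoids (i := 0) (j := 1) (by decide) (by decide)⟩
  have hτ : StrictMono τ := fun i j hij => by
    by_contra hle
    refine h (permContains_of_forall_lt (f := ![i, j]) (by decide) (by simp [hij]) ?_)
    simp [Fin.forall_fin_succ, p21, lt_of_le_of_ne (not_lt.1 hle) (τ.injective.ne hij.ne')]
  exact Equiv.ext (congrFun hτ.eq_id)

lemma eq_zero_or_eq_last_of_permAvoids {σ : Perm (Fin (m + 1))} (h213 : PermAvoids σ p213)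
    (h231 : PermAvoids σ p231) : σ 0 = 0 ∨ σ 0 = Fin.last m := by
  by_contra! h
  obtain ⟨hσ₀, hσₗ⟩ := h
  have hlo : 0 < σ 0 := Fin.pos_iff_ne_zero.2 hσ₀
  have hhi : σ 0 < Fin.last m := lt_of_le_of_ne (Fin.le_last _) hσₗ
  set i := σ.symm 0
  set j := σ.symm (Fin.last m)
  have hi : σ i = 0 := σ.apply_symm_apply 0
  have hj : σ j = Fin.last m := σ.apply_symm_apply _
  have hi₀ : 0 < i := Fin.pos_iff_ne_zero.2 fun h => hσ₀ (h ▸ hi)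
  have hj₀ : 0 < j := Fin.pos_iff_ne_zero.2 fun h => hσₗ (h ▸ hj)
  have hij : i ≠ j := fun h => (hlo.trans hhi).ne (hi.symm.trans ((congrArg σ h).trans hj))
  rcases lt_or_gt_of_ne hij with hij | hji
  · exact h213 (permContains_p213 hi₀ hij (by rwa [hi]) (by rwa [hj]))
  · exact h231 (permContains_p231 hj₀ hji (by rwa [hi]) (by rwa [hj]))

noncomputable def consPerm (a : Fin (m + 1)) (τ : Perm (Fin m)) : Perm (Fin (m + 1)) :=
  Equiv.ofBijective (Fin.cons a (a.succAbove ∘ τ)) <| Finite.injective_iff_bijective.1 <|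
    Fin.cons_injective_iff.2 ⟨fun ⟨i, hi⟩ => a.succAbove_ne (τ i) hi,
      (Fin.succAbove_right_injective).comp τ.injective⟩

@[simp]
lemma consPerm_zero (a : Fin (m + 1)) (τ : Perm (Fin m)) : consPerm a τ 0 = a := rfl

@[simp]
lemma consPerm_succ (a : Fin (m + 1)) (τ : Perm (Fin m)) (i : Fin m) :
    consPerm a τ i.succ = a.succAbove (τ i) := rfl

lemma bijective_consPerm : Bijective fun x : Fin (m + 1) × Perm (Fin m) => consPerm x.1 x.2 := by
  refine (Fintype.bijective_iff_injective_and_card _).2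
    ⟨fun ⟨a, τ⟩ ⟨b, υ⟩ h => ?_, ?_⟩
  · have hab : a = b := by simpa using congrArg (· 0) h
    subst hab
    simp only [Prod.mk.injEq, true_and]
    exact Equiv.ext fun i => by simpa using congrArg (· i.succ) h
  · simp [Fintype.card_perm, Nat.factorial_succ]

lemma card_subtype_perm_eq_sum (P : Perm (Fin (m + 1)) → Prop) :
    Nat.card {σ // P σ} = ∑ a, Nat.card {τ // P (consPerm a τ)} := by
  rw [← Nat.card_sigma,
    ← Nat.card_congr (subtypeProdEquivSigmaSubtype fun a τ => P (consPerm a τ))]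
  exact Nat.card_congr ((Equiv.ofBijective _ bijective_consPerm).subtypeEquiv fun _ => Iff.rfl).symm

lemma PermContains.cons {τ : Perm (Fin m)} {p : Fin k → Fin k} (h : PermContains τ p)
    (a : Fin (m + 1)) : PermContains (consPerm a τ) p := by
  obtain ⟨f, hf, hp⟩ := h
  refine ⟨Fin.succ ∘ f, Fin.strictMono_succ.comp hf, fun i j => ?_⟩
  simp [hp, (Fin.strictMono_succAbove a).lt_iff_lt]

lemma permContains_of_consPerm {a : Fin (m + 1)} {τ : Perm (Fin m)} {p : Fin k → Fin k}
    {f : Fin k → Fin (m + 1)} (hf : StrictMono f) (h₀ : ∀ i, 0 < f i)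
    (hp : ∀ i j, p i < p j ↔ consPerm a τ (f i) < consPerm a τ (f j)) :
    PermContains τ p := by
  have h₀ i : f i ≠ 0 := (h₀ i).ne'
  refine ⟨fun i => (f i).pred (h₀ i), Fin.strictMono_pred_comp h₀ hf, fun i j => ?_⟩
  have hval i : consPerm a τ (f i) = a.succAbove (τ ((f i).pred (h₀ i))) := by
    rw [← consPerm_succ, Fin.succ_pred]
  rw [hp, hval, hval, (Fin.strictMono_succAbove a).lt_iff_lt]

lemma permContains_consPerm_zero_iff {τ : Perm (Fin m)} {p : Fin (k + 1) → Fin (k + 1)}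
    (hp : ∃ j, p j < p 0) : PermContains (consPerm 0 τ) p ↔ PermContains τ p := by
  refine ⟨fun ⟨f, hf, hfp⟩ => permContains_of_consPerm hf (fun i => ?_) hfp,
    fun h => PermContains.cons h 0⟩
  obtain ⟨j, hj⟩ := hp
  have hf₀ : f 0 ≠ 0 := fun h₀ =>
    Fin.not_lt_zero (consPerm 0 τ (f j)) (by simpa [h₀] using (hfp j 0).1 hj)
  exact (Fin.pos_iff_ne_zero.2 hf₀).trans_le (hf.monotone (Fin.zero_le i))

lemma permContains_consPerm_last_iff {τ : Perm (Fin m)} {p : Fin (k + 1) → Fin (k + 1)}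
    (hp : ∃ j, p 0 < p j) : PermContains (consPerm (Fin.last m) τ) p ↔ PermContains τ p := by
  refine ⟨fun ⟨f, hf, hfp⟩ => permContains_of_consPerm hf (fun i => ?_) hfp,
    fun h => PermContains.cons h _⟩
  obtain ⟨j, hj⟩ := hp
  have hf₀ : f 0 ≠ 0 := fun h₀ =>
    (Fin.le_last _).not_gt (by simpa [h₀] using (hfp 0 j).1 hj)
  exact (Fin.pos_iff_ne_zero.2 hf₀).trans_le (hf.monotone (Fin.zero_le i))

lemma PermContains.of_consPerm_cons {a : Fin (m + 1)} {τ : Perm (Fin m)} {b : Fin (k + 1)}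
    {π : Fin k → Fin k} (h : PermContains (consPerm a τ) (Fin.cons b (b.succAbove ∘ π))) :
    PermContains τ π := by
  obtain ⟨f, hf, hp⟩ := h
  refine permContains_of_consPerm (a := a) (f := f ∘ Fin.succ) (hf.comp Fin.strictMono_succ)
    (fun i => (Fin.zero_le _).trans_lt (hf (Fin.succ_pos i))) fun i j => ?_
  simpa [(Fin.strictMono_succAbove b).lt_iff_lt] using hp i.succ j.succ

lemma strictMono_cons_zero_succ {f : Fin k → Fin m} (hf : StrictMono f) :
    StrictMono (Fin.cons 0 (Fin.succ ∘ f) : Fin (k + 1) → Fin (m + 1)) := by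
  intro i j hij
  induction i using Fin.cases <;> induction j using Fin.cases <;>
    simp_all [hf.lt_iff_lt, Fin.succ_pos]

lemma permContains_consPerm_zero_cons_iff {τ : Perm (Fin m)} {π : Fin k → Fin k} :
    PermContains (consPerm 0 τ) (Fin.cons 0 ((0 : Fin (k + 1)).succAbove ∘ π)) ↔
      PermContains τ π := by
  refine ⟨PermContains.of_consPerm_cons,
    fun ⟨g, hg, hp⟩ => ⟨_, strictMono_cons_zero_succ hg, ?_⟩⟩
  intro i j
  induction i using Fin.cases <;> induction j using Fin.cases <;> simp [hp, Fin.succ_pos]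

lemma permContains_consPerm_last_cons_iff {τ : Perm (Fin m)} {π : Fin k → Fin k} :
    PermContains (consPerm (Fin.last m) τ)
        (Fin.cons (Fin.last k) ((Fin.last k).succAbove ∘ π)) ↔
      PermContains τ π := by
  refine ⟨PermContains.of_consPerm_cons,
    fun ⟨g, hg, hp⟩ => ⟨_, strictMono_cons_zero_succ hg, ?_⟩⟩
  intro i j
  have not_last_lt {n : ℕ} (x : Fin (n + 1)) : ¬ Fin.last n < x := (Fin.le_last x).not_gt
  induction i using Fin.cases <;> induction j using Fin.cases <;>
    simp [hp, Fin.castSucc_lt_last, not_last_lt]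

lemma p1432_eq_cons : p1432 = Fin.cons 0 ((0 : Fin 4).succAbove ∘ p321) := by decide

lemma p321_eq_cons : p321 = Fin.cons (Fin.last 2) ((Fin.last 2).succAbove ∘ p21) := by decide

lemma avoids213231_consPerm_zero_iff {q : Fin (k + 1) → Fin (k + 1)} (hq : ∃ j, q j < q 0)
    {τ : Perm (Fin m)} : Avoids213231 q (consPerm 0 τ) ↔ Avoids213231 q τ := by
  simp only [Avoids213231, PermAvoids, permContains_consPerm_zero_iff hq,
    permContains_consPerm_zero_iff (p := p213) ⟨1, by decide⟩,
    permContains_consPerm_zero_iff (p := p231) ⟨2, by decide⟩]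

lemma avoids213231_consPerm_last_iff {q : Fin (k + 1) → Fin (k + 1)} (hq : ∃ j, q 0 < q j)
    {τ : Perm (Fin m)} : Avoids213231 q (consPerm (Fin.last m) τ) ↔ Avoids213231 q τ := by
  simp only [Avoids213231, PermAvoids, permContains_consPerm_last_iff hq,
    permContains_consPerm_last_iff (p := p213) ⟨2, by decide⟩,
    permContains_consPerm_last_iff (p := p231) ⟨1, by decide⟩]

lemma avoids213231_p1432_consPerm_zero_iff {τ : Perm (Fin m)} :
    Avoids213231 p1432 (consPerm 0 τ) ↔ Avoids213231 p321 τ := by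
  simp only [Avoids213231, PermAvoids, p1432_eq_cons, permContains_consPerm_zero_cons_iff,
    permContains_consPerm_zero_iff (p := p213) ⟨1, by decide⟩,
    permContains_consPerm_zero_iff (p := p231) ⟨2, by decide⟩]

lemma avoids213231_p321_consPerm_last_iff {τ : Perm (Fin m)} :
    Avoids213231 p321 (consPerm (Fin.last m) τ) ↔ τ = 1 := by
  simp only [Avoids213231, PermAvoids, p321_eq_cons, permContains_consPerm_last_cons_iff,
    permContains_consPerm_last_iff (p := p213) ⟨2, by decide⟩,
    permContains_consPerm_last_iff (p := p231) ⟨1, by decide⟩]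
  refine ⟨fun h => permAvoids_p21_iff.1 h.2.2, ?_⟩
  rintro rfl
  exact ⟨one_permAvoids (i := 0) (j := 1) (by decide) (by decide),
    one_permAvoids (i := 0) (j := 2) (by decide) (by decide), permAvoids_p21_iff.2 rfl⟩

lemma card_avoids213231_fin_one {q : Fin k → Fin k} (hk : 1 < k) :
    Nat.card {σ : Perm (Fin 1) // Avoids213231 q σ} = 1 := by
  refine Nat.card_eq_one_iff_unique.2 ⟨inferInstance, ⟨⟨1, ?_, ?_, ?_⟩⟩⟩ <;>
    exact fun h => absurd (PermContains.le h) (by omega)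

lemma card_avoids213231_succ (q : Fin k → Fin k) (hm : m ≠ 0) :
    Nat.card {σ : Perm (Fin (m + 1)) // Avoids213231 q σ} =
      Nat.card {τ : Perm (Fin m) // Avoids213231 q (consPerm 0 τ)} +
        Nat.card {τ : Perm (Fin m) // Avoids213231 q (consPerm (Fin.last m) τ)} := by
  rw [card_subtype_perm_eq_sum, Fintype.sum_eq_add 0 (Fin.last m) (by simp [Fin.ext_iff]; omega)]
  rintro a ⟨ha₀, haₗ⟩
  refine Nat.card_eq_zero.2 (Or.inl ⟨fun ⟨τ, h213, h231, _⟩ => ?_⟩)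
  simpa [ha₀, haₗ] using eq_zero_or_eq_last_of_permAvoids h213 h231

theorem card_avoids213231_p321 (hn : 1 ≤ n) :
    Nat.card {σ : Perm (Fin n) // Avoids213231 p321 σ} = n := by
  induction n, hn using Nat.le_induction with
  | base => exact card_avoids213231_fin_one (by decide)
  | succ n hn ih =>
    rw [card_avoids213231_succ _ (by omega)]
    simp only [avoids213231_consPerm_zero_iff (q := p321) ⟨1, by decide⟩,
      avoids213231_p321_consPerm_last_iff, ih, Nat.card_unique]

theorem card_avoids213231_p1432 (hn : 1 ≤ n) :
    Nat.card {σ : Perm (Fin n) // Avoids213231 p1432 σ} = n.choose 2 + 1 := by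
  induction n, hn using Nat.le_induction with
  | base => exact card_avoids213231_fin_one (by decide)
  | succ n hn ih =>
    rw [card_avoids213231_succ _ (by omega)]
    simp only [avoids213231_p1432_consPerm_zero_iff,
      avoids213231_consPerm_last_iff (q := p1432) ⟨1, by decide⟩, card_avoids213231_p321 hn, ih,
      Nat.choose_succ_succ' n 1, Nat.choose_one_right, Nat.reduceAdd]
    omega

end PatternAvoidance

theorem stmt15 :
    ∀ n, 1 ≤ n → Nat.card {σ : Equiv.Perm (Fin n) //
      PermAvoids σ p213 ∧ PermAvoids σ p231 ∧ PermAvoids σ (![0, 3, 2, 1] : Fin 4 → Fin 4)}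
      = Nat.choose n 2 + 1 :=
  fun _ => PatternAvoidance.card_avoids213231_p1432
end
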